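/- (Type-2 Gumbel mixture of Hüsler–Reiss distributions.) For every b > 0 and all x, y ∈ ℝ, ∫_0^∞ [Φ(λ + (y−x)/(2λ)) e^{−x} + Φ(λ + (x−y)/(2λ)) e^{−y}] · 2b λ^{−3} e^{−b/λ²} dλ = e^{−x} + e^{−y} − e^{−(x+y)/2} · e^{−√(((y−x)/2)² + 2b)}. -/

import Mathlib

open MeasureTheory Filter Real Set

/-- Standard normal density. -/
noncomputable def stdPdf (t : ℝ) : ℝ := (Real.sqrt (2 * Real.pi))⁻¹ * Real.exp (-(t ^ 2) / 2)

/-- Standard normal CDF. -/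
noncomputable def stdCdf (x : ℝ) : ℝ := ∫ t in Set.Iic x, stdPdf t

/-!
Write `w(λ) = e^{-b/λ²}` for the Type-2 Gumbel CDF, `a = (y - x)/2` and `c = √(a² + 2b)`.
Completing the square in the Gaussian exponent gives
`φ(λ + a/λ) w(λ) = e^{-(a+c)} φ(λ - c/λ) = e^{c-a} φ(-(λ + c/λ))`.
So after an integration by parts, `Φ(λ + a/λ) w'(λ)` has the explicit primitive
`Φ(λ + a/λ) w(λ) - (c - a)/(2c) e^{-(a+c)} Φ(λ - c/λ) + (c + a)/(2c) e^{c-a} Φ(-(λ + c/λ))`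
on `(0, ∞)`, which tends to `0` at `0⁺` and to `1 - (c - a)/(2c) e^{-(a+c)}` at `∞`.
The two terms of the integrand are the cases `a` and `-a`; their exponential factors agree
after multiplying by `e^{-x}` and `e^{-y}`, and the coefficients `(c ∓ a)/(2c)` add up to `1`.
-/

open ProbabilityTheory
open scoped Topology

lemma stdPdf_eq_gaussianPDFReal : stdPdf = gaussianPDFReal 0 1 := by
  ext t
  simp [stdPdf, gaussianPDFReal]

lemma stdCdf_eq_cdf_gaussianReal : stdCdf = cdf (gaussianReal 0 1) := by
  ext x
  rw [cdf_eq_real, measureReal_def, gaussianReal_apply_eq_integral _ one_ne_zero,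
    ENNReal.toReal_ofReal
      (setIntegral_nonneg measurableSet_Iic fun t _ ↦ gaussianPDFReal_nonneg _ _ t),
    stdCdf, stdPdf_eq_gaussianPDFReal]

lemma stdCdf_nonneg (x : ℝ) : 0 ≤ stdCdf x := stdCdf_eq_cdf_gaussianReal ▸ cdf_nonneg _ x

lemma stdCdf_le_one (x : ℝ) : stdCdf x ≤ 1 := stdCdf_eq_cdf_gaussianReal ▸ cdf_le_one _ x

lemma tendsto_stdCdf_atTop : Tendsto stdCdf atTop (𝓝 1) :=
  stdCdf_eq_cdf_gaussianReal ▸ tendsto_cdf_atTop _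

lemma tendsto_stdCdf_atBot : Tendsto stdCdf atBot (𝓝 0) :=
  stdCdf_eq_cdf_gaussianReal ▸ tendsto_cdf_atBot _

lemma continuous_stdPdf : Continuous stdPdf := by
  unfold stdPdf
  fun_prop

lemma stdCdf_eq_add_intervalIntegral (x : ℝ) :
    stdCdf x = stdCdf 0 + ∫ t in (0 : ℝ)..x, stdPdf t := by
  have hint : Integrable stdPdf := stdPdf_eq_gaussianPDFReal ▸ integrable_gaussianPDFReal 0 1
  rw [← intervalIntegral.integral_Iic_sub_Iic hint.integrableOn hint.integrableOn, stdCdf, stdCdf]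
  ring

lemma hasDerivAt_stdCdf (x : ℝ) : HasDerivAt stdCdf (stdPdf x) x := by
  rw [funext stdCdf_eq_add_intervalIntegral]
  exact (continuous_stdPdf.integral_hasStrictDerivAt 0 x).hasDerivAt.const_add _

lemma stdPdf_eq_exp_mul_stdPdf (u v : ℝ) :
    stdPdf u = exp ((v ^ 2 - u ^ 2) / 2) * stdPdf v := by
  simp only [stdPdf]
  rw [mul_left_comm, ← exp_add]
  ring_nf

lemma stdPdf_add_div_mul_exp {a b c l : ℝ} (hc : c ^ 2 = a ^ 2 + 2 * b) (hl : l ≠ 0) :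
    stdPdf (l + a / l) * exp (-b / l ^ 2) = exp (-(a + c)) * stdPdf (l - c / l) := by
  rw [stdPdf_eq_exp_mul_stdPdf _ (l - c / l), mul_right_comm, ← exp_add]
  congr 2
  field_simp
  linear_combination hc

lemma stdPdf_neg_add_div (c : ℝ) {l : ℝ} (hl : l ≠ 0) :
    stdPdf (-(l + c / l)) = exp (-(2 * c)) * stdPdf (l - c / l) := by
  rw [stdPdf_eq_exp_mul_stdPdf _ (l - c / l)]
  congr 2
  field_simp
  ring

lemma hasDerivAt_add_div (r : ℝ) {l : ℝ} (hl : l ≠ 0) :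
    HasDerivAt (fun u ↦ u + r / u) (1 - r / l ^ 2) l := by
  simpa [div_eq_mul_inv, sub_eq_add_neg] using
    (hasDerivAt_id' l).fun_add ((hasDerivAt_inv hl).const_mul r)

lemma hasDerivAt_exp_neg_div_sq (b : ℝ) {l : ℝ} (hl : l ≠ 0) :
    HasDerivAt (fun u ↦ exp (-b / u ^ 2)) (2 * b * l ^ (-3 : ℤ) * exp (-b / l ^ 2)) l := by
  convert ((hasDerivAt_pow 2 l).inv (pow_ne_zero 2 hl)).const_mul (-b) |>.exp using 1
  · simp [div_eq_mul_inv]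
  · simp [zpow_neg]
    field_simp

lemma tendsto_add_div_atTop (r : ℝ) : Tendsto (fun l : ℝ ↦ l + r / l) atTop atTop :=
  tendsto_id.atTop_add (tendsto_const_nhds.div_atTop tendsto_id)

lemma tendsto_const_div_nhdsGT_zero {r : ℝ} (hr : 0 < r) :
    Tendsto (fun l : ℝ ↦ r / l) (𝓝[>] 0) atTop := by
  simpa [div_eq_mul_inv] using tendsto_inv_nhdsGT_zero.const_mul_atTop hr

lemma tendsto_exp_neg_div_sq_nhdsGT_zero {b : ℝ} (hb : 0 < b) :
    Tendsto (fun l : ℝ ↦ exp (-b / l ^ 2)) (𝓝[>] 0) (𝓝 0) := by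
  have hsq : Tendsto (fun l : ℝ ↦ l ^ 2) (𝓝[>] 0) (𝓝[>] 0) :=
    tendsto_nhdsWithin_iff.2 ⟨((continuous_pow 2).tendsto' 0 0 (by simp)).mono_left
      nhdsWithin_le_nhds, eventually_mem_nhdsWithin.mono fun l hl ↦ mem_Ioi.2 (pow_pos hl 2)⟩
  simpa [Function.comp_def, neg_div] using tendsto_exp_atBot.comp
    (tendsto_neg_atTop_atBot.comp ((tendsto_const_div_nhdsGT_zero hb).comp hsq))

lemma integral_Ioi_of_hasDerivAt_of_nonneg_of_tendsto_nhdsGT {g g' : ℝ → ℝ} {a l₀ l : ℝ}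
    (hderiv : ∀ x ∈ Ioi a, HasDerivAt g (g' x) x) (g'pos : ∀ x ∈ Ioi a, 0 ≤ g' x)
    (h0 : Tendsto g (𝓝[>] a) (𝓝 l₀)) (hg : Tendsto g atTop (𝓝 l)) :
    ∫ x in Ioi a, g' x = l - l₀ := by
  rw [← Ici_sdiff_left] at h0
  have hderiv' : ∀ x ∈ Ioi a, HasDerivAt (Function.update g a l₀) (g' x) x := fun x hx ↦
    (hderiv x hx).congr_of_eventuallyEq <|
      (eventually_ne_nhds (ne_of_gt hx)).mono fun y hy ↦ Function.update_of_ne hy _ _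
  have hg' : Tendsto (Function.update g a l₀) atTop (𝓝 l) :=
    hg.congr' <| (eventually_ne_atTop a).mono fun x hx ↦ (Function.update_of_ne hx _ _).symm
  simpa using integral_Ioi_of_hasDerivAt_of_nonneg (continuousWithinAt_update_same.mpr h0)
    hderiv' g'pos hg'

noncomputable def gumbelPrimitive (a b c l : ℝ) : ℝ :=
  stdCdf (l + a / l) * exp (-b / l ^ 2)
    - (c - a) / (2 * c) * exp (-(a + c)) * stdCdf (l - c / l)
    + (c + a) / (2 * c) * exp (c - a) * stdCdf (-(l + c / l))

lemma hasDerivAt_gumbelPrimitive {a b c l : ℝ} (hc : c ^ 2 = a ^ 2 + 2 * b) (hc0 : c ≠ 0)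
    (hl : l ≠ 0) :
    HasDerivAt (gumbelPrimitive a b c)
      (stdCdf (l + a / l) * (2 * b * l ^ (-3 : ℤ) * exp (-b / l ^ 2))) l := by
  have hΦa : HasDerivAt (fun u ↦ stdCdf (u + a / u)) (stdPdf (l + a / l) * (1 - a / l ^ 2)) l :=
    (hasDerivAt_stdCdf _).comp l (hasDerivAt_add_div a hl)
  have hΦc : HasDerivAt (fun u ↦ stdCdf (u - c / u)) (stdPdf (l - c / l) * (1 + c / l ^ 2)) l := by
    simpa [Function.comp_def, neg_div, ← sub_eq_add_neg] using
      (hasDerivAt_stdCdf _).comp l (hasDerivAt_add_div (-c) hl)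
  have hΦc' : HasDerivAt (fun u ↦ stdCdf (-(u + c / u)))
      (stdPdf (-(l + c / l)) * -(1 - c / l ^ 2)) l :=
    (hasDerivAt_stdCdf _).comp l (hasDerivAt_add_div c hl).fun_neg
  refine (((hΦa.fun_mul (hasDerivAt_exp_neg_div_sq b hl)).fun_sub
    (hΦc.const_mul ((c - a) / (2 * c) * exp (-(a + c))))).fun_add
    (hΦc'.const_mul ((c + a) / (2 * c) * exp (c - a)))).congr_deriv ?_
  have hcoef : (c - a) / (2 * c) * (1 + c / l ^ 2) + (c + a) / (2 * c) * (1 - c / l ^ 2)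
      = 1 - a / l ^ 2 := by
    field_simp
    ring
  have hexp : exp (c - a) * exp (-(2 * c)) = exp (-(a + c)) := by
    rw [← exp_add]
    ring_nf
  rw [stdPdf_neg_add_div c hl]
  linear_combination (1 - a / l ^ 2) * stdPdf_add_div_mul_exp hc hl
    - exp (-(a + c)) * stdPdf (l - c / l) * hcoef
    - (c + a) / (2 * c) * stdPdf (l - c / l) * (1 - c / l ^ 2) * hexp

lemma tendsto_gumbelPrimitive_atTop (a b c : ℝ) :
    Tendsto (gumbelPrimitive a b c) atTop (𝓝 (1 - (c - a) / (2 * c) * exp (-(a + c)))) := by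
  have hΦa := tendsto_stdCdf_atTop.comp (tendsto_add_div_atTop a)
  have hΦc : Tendsto (fun l ↦ stdCdf (l - c / l)) atTop (𝓝 1) := by
    simpa [Function.comp_def, neg_div, ← sub_eq_add_neg] using
      tendsto_stdCdf_atTop.comp (tendsto_add_div_atTop (-c))
  have hΦc' := tendsto_stdCdf_atBot.comp (tendsto_neg_atTop_atBot.comp (tendsto_add_div_atTop c))
  have hw : Tendsto (fun l : ℝ ↦ exp (-b / l ^ 2)) atTop (𝓝 1) := by
    simpa [Function.comp_def] using (continuous_exp.tendsto 0).comp
      (tendsto_const_nhds.div_atTop (tendsto_pow_atTop two_ne_zero))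
  unfold gumbelPrimitive
  simpa [Function.comp_def] using ((hΦa.mul hw).sub
    (hΦc.const_mul ((c - a) / (2 * c) * exp (-(a + c))))).add
    (hΦc'.const_mul ((c + a) / (2 * c) * exp (c - a)))

lemma tendsto_gumbelPrimitive_nhdsGT_zero (a : ℝ) {b c : ℝ} (hb : 0 < b) (hc : 0 < c) :
    Tendsto (gumbelPrimitive a b c) (𝓝[>] 0) (𝓝 0) := by
  have hid : Tendsto (fun l : ℝ ↦ l) (𝓝[>] 0) (𝓝 0) := tendsto_id.mono_left nhdsWithin_le_nhds
  have hcl := tendsto_const_div_nhdsGT_zero hc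
  have hΦaw : Tendsto (fun l ↦ stdCdf (l + a / l) * exp (-b / l ^ 2)) (𝓝[>] 0) (𝓝 0) :=
    isBoundedUnder_le_mul_tendsto_zero (isBoundedUnder_of ⟨1, fun l ↦ by
      simpa [abs_of_nonneg (stdCdf_nonneg _)] using stdCdf_le_one _⟩)
      (tendsto_exp_neg_div_sq_nhdsGT_zero hb)
  have hΦc : Tendsto (fun l ↦ stdCdf (l - c / l)) (𝓝[>] 0) (𝓝 0) := by
    simpa [Function.comp_def, ← sub_eq_add_neg] using
      tendsto_stdCdf_atBot.comp (hid.add_atBot (tendsto_neg_atTop_atBot.comp hcl))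
  have hΦc' := tendsto_stdCdf_atBot.comp (tendsto_neg_atTop_atBot.comp (hid.add_atTop hcl))
  unfold gumbelPrimitive
  simpa [Function.comp_def] using (hΦaw.sub
    (hΦc.const_mul ((c - a) / (2 * c) * exp (-(a + c))))).add
    (hΦc'.const_mul ((c + a) / (2 * c) * exp (c - a)))

lemma integral_gumbelMixture {a b c p q : ℝ} (hb : 0 < b) (hc0 : 0 < c)
    (hc : c ^ 2 = a ^ 2 + 2 * b) (hp : 0 ≤ p) (hq : 0 ≤ q) :
    ∫ l in Ioi (0 : ℝ), (stdCdf (l + a / l) * p + stdCdf (l + -a / l) * q)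
        * (2 * b * l ^ (-3 : ℤ) * exp (-b / l ^ 2))
      = p * (1 - (c - a) / (2 * c) * exp (-(a + c)))
        + q * (1 - (c - -a) / (2 * c) * exp (-(-a + c))) := by
  have hc' : c ^ 2 = (-a) ^ 2 + 2 * b := by rw [neg_sq, hc]
  have h0 : Tendsto (fun l ↦ p * gumbelPrimitive a b c l + q * gumbelPrimitive (-a) b c l)
      (𝓝[>] 0) (𝓝 0) := by
    simpa using ((tendsto_gumbelPrimitive_nhdsGT_zero a hb hc0).const_mul p).add
      ((tendsto_gumbelPrimitive_nhdsGT_zero (-a) hb hc0).const_mul q)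
  rw [integral_Ioi_of_hasDerivAt_of_nonneg_of_tendsto_nhdsGT (fun l hl ↦ ?deriv)
    (fun l hl ↦ ?nonneg) h0 (((tendsto_gumbelPrimitive_atTop a b c).const_mul p).add
      ((tendsto_gumbelPrimitive_atTop (-a) b c).const_mul q)), sub_zero]
  case deriv =>
    exact (((hasDerivAt_gumbelPrimitive hc hc0.ne' (ne_of_gt hl)).const_mul p).fun_add
      ((hasDerivAt_gumbelPrimitive hc' hc0.ne' (ne_of_gt hl)).const_mul q)).congr_deriv (by ring)
  case nonneg =>
    have hl : 0 < l := hl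
    have := stdCdf_nonneg (l + a / l)
    have := stdCdf_nonneg (l + -a / l)
    positivity

/-- **Type-2 Gumbel mixture of Hüsler–Reiss distributions.** -/
theorem stmt9 (b : ℝ) (hb : 0 < b) (x y : ℝ) :
    ∫ l in Set.Ioi (0 : ℝ),
        (stdCdf (l + (y - x) / (2 * l)) * Real.exp (-x)
          + stdCdf (l + (x - y) / (2 * l)) * Real.exp (-y))
          * (2 * b * l ^ (-3 : ℤ) * Real.exp (-b / l ^ 2))
      = Real.exp (-x) + Real.exp (-y)
        - Real.exp (-((x + y) / 2)) * Real.exp (-Real.sqrt (((y - x) / 2) ^ 2 + 2 * b)) := by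
  simp_rw [← div_div]
  rw [show (x - y) / 2 = -((y - x) / 2) by ring]
  set a := (y - x) / 2 with ha
  set c := √(a ^ 2 + 2 * b)
  have hc0 : 0 < c := sqrt_pos.2 (by positivity)
  rw [integral_gumbelMixture hb hc0 (sq_sqrt (by positivity)) (exp_pos _).le (exp_pos _).le]
  have hx : exp (-x) * exp (-(a + c)) = exp (-((x + y) / 2)) * exp (-c) := by
    rw [← exp_add, ← exp_add, ha]
    ring_nf
  have hy : exp (-y) * exp (-(-a + c)) = exp (-((x + y) / 2)) * exp (-c) := by
    rw [← exp_add, ← exp_add, ha]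
    ring_nf
  have hcoef : (c - a) / (2 * c) + (c - -a) / (2 * c) = 1 := by
    field_simp
    ring
  linear_combination (-(c - a) / (2 * c)) * hx - ((c - -a) / (2 * c)) * hy
    - exp (-((x + y) / 2)) * exp (-c) * hcoef
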